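/- arXiv:2102.00972 — 3 statements merged into one kernel-verified Lean document; each statement's English description precedes it below -/
import Mathlib

section
/- Let α, β be real numbers with α² > 4 and β > 0. Then the quartic polynomial q_{α,β} has exactly 2 roots (counted with multiplicity) in the open unit disk U_1(0) = {z ∈ ℂ : |z| < 1}. -/
open Polynomial

/-- The quartic polynomial `q_{α,β}(w) = w⁴ + α w³ + (β − 4) w² − α w + 3` over ℂ. -/
noncomputable def q (α β : ℝ) : Polynomial ℂ :=
  X ^ 4 + C (α : ℂ) * X ^ 3 + C (((β - 4 : ℝ)) : ℂ) * X ^ 2 - C (α : ℂ) * X + C 3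

/-!
For `0 < b < 1` with `|α| b + b² < 3`, the quartic `q_{α,β}` factors over `ℝ` as
`(w² + a w + b)(w² + c w + 3/b)` exactly when `β` equals an explicit rational function of `b`,
which tends to `+∞` as `b → 0⁺` and vanishes at the positive root of `|α| b + b² = 3`; the
intermediate value theorem therefore produces such a factorization for every `β > 0`. The
inequality `|α| b + b² < 3` gives `|a| < 1 + b` and `|c| < 1 + 3/b`, so by the Schur–Cohn
criterion for real quadratics the first factor has both roots in the unit disk, while the
second, whose roots are the reciprocals of those of `w² + (c b/3) w + b/3`, has both outside.
-/

open Filter Topology Set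

theorem sq_lt_one_of_sq_add_mul_add_eq_zero {a b x : ℝ} (hb : b < 1) (ha : |a| < 1 + b)
    (hx : x ^ 2 + a * x + b = 0) : x ^ 2 < 1 := by
  obtain ⟨ha₁, ha₂⟩ := abs_lt.1 ha
  by_contra! h
  rcases le_abs'.1 ((one_le_sq_iff_one_le_abs x).1 h) with hx₁ | hx₁
  · nlinarith [mul_nonneg (by linarith : (0:ℝ) ≤ -x - 1) (by linarith : (0:ℝ) ≤ -x - b)]
  · nlinarith [mul_nonneg (by linarith : (0:ℝ) ≤ x - 1) (by linarith : (0:ℝ) ≤ x - b)]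

namespace Complex

theorem norm_lt_one_of_sq_add_mul_add_eq_zero {a b : ℝ} (hb : b < 1) (ha : |a| < 1 + b)
    {z : ℂ} (hz : z ^ 2 + a * z + b = 0) : ‖z‖ < 1 := by
  have hre : z.re ^ 2 - z.im ^ 2 + a * z.re + b = 0 := by
    simpa [sq] using congrArg re hz
  have him : (2 * z.re + a) * z.im = 0 := by
    have h := congrArg im hz
    simp only [sq, add_im, mul_im, ofReal_re, ofReal_im, zero_im] at h
    linear_combination h
  rw [← sq_lt_one_iff₀ (norm_nonneg z), Complex.sq_norm, normSq_apply]
  rcases mul_eq_zero.1 him with hsum | him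
  · have ha : a = -2 * z.re := by linarith
    subst ha
    nlinarith
  · simp only [him, mul_zero, add_zero, sq, sub_zero] at hre ⊢
    nlinarith [sq_lt_one_of_sq_add_mul_add_eq_zero hb ha (x := z.re) (by linarith)]

theorem one_lt_norm_of_sq_add_mul_add_eq_zero {c d : ℝ} (hd : 1 < d) (hc : |c| < 1 + d)
    {z : ℂ} (hz : z ^ 2 + c * z + d = 0) : 1 < ‖z‖ := by
  have hd₀ : 0 < d := by linarith
  have hz₀ : z ≠ 0 := by
    rintro rfl
    simp [hd₀.ne'] at hz
  have hinv : z⁻¹ ^ 2 + ((c / d : ℝ) : ℂ) * z⁻¹ + ((d⁻¹ : ℝ) : ℂ) = 0 := by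
    have : (d : ℂ) ≠ 0 := ofReal_ne_zero.2 hd₀.ne'
    push_cast
    field_simp
    linear_combination hz
  have hc' : |c / d| < 1 + d⁻¹ := by
    rw [abs_div, abs_of_pos hd₀, div_lt_iff₀ hd₀, add_mul, inv_mul_cancel₀ hd₀.ne']
    linarith
  have := norm_lt_one_of_sq_add_mul_add_eq_zero (inv_lt_one_of_one_lt₀ hd) hc' hinv
  rw [norm_inv, inv_lt_one_iff₀] at this
  exact this.resolve_left (by simpa using hz₀)

end Complex

namespace Polynomial

theorem filter_roots_mul_eq_left {R : Type*} [CommRing R] [IsDomain R] {p r : R[X]}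
    (hpr : p * r ≠ 0) {P : R → Prop} [DecidablePred P] (hp : ∀ z ∈ p.roots, P z)
    (hr : ∀ z ∈ r.roots, ¬P z) : (p * r).roots.filter P = p.roots := by
  rw [roots_mul hpr, Multiset.filter_add, Multiset.filter_eq_self.2 hp,
    Multiset.filter_eq_nil.2 hr, add_zero]

end Polynomial

noncomputable def realQuadratic (a b : ℝ) : ℂ[X] := X ^ 2 + C (a : ℂ) * X + C (b : ℂ)

theorem realQuadratic_monic (a b : ℝ) : (realQuadratic a b).Monic := by
  unfold realQuadratic
  monicity!

theorem card_roots_realQuadratic (a b : ℝ) : (realQuadratic a b).roots.card = 2 := by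
  rw [IsAlgClosed.card_roots_eq_natDegree]
  unfold realQuadratic
  compute_degree!

theorem mem_roots_realQuadratic {a b : ℝ} {z : ℂ} :
    z ∈ (realQuadratic a b).roots ↔ z ^ 2 + a * z + b = 0 := by
  rw [mem_roots (realQuadratic_monic a b).ne_zero]
  simp [realQuadratic]

/-- Matching `(w² + a w + b)(w² + c w + 3/b)` with `q_{α,β}`: the coefficients of `w³` and `w`
force `a = innerCoeff α b` and `c = outerCoeff α b`, and then the coefficient of `w²` forces
`β = splitBeta α b`. -/
noncomputable def innerCoeff (α b : ℝ) : ℝ := α * b * (b + 1) / (b ^ 2 - 3)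

noncomputable def outerCoeff (α b : ℝ) : ℝ := α * (b + 3) / (3 - b ^ 2)

noncomputable def splitBeta (α b : ℝ) : ℝ := 3 / b + (b + 4 + innerCoeff α b * outerCoeff α b)

theorem q_splitBeta_eq_mul {α b : ℝ} (hb : b ≠ 0) (hb₃ : b ^ 2 ≠ 3) :
    q α (splitBeta α b) =
      realQuadratic (innerCoeff α b) b * realQuadratic (outerCoeff α b) (3 / b) := by
  have hmul : ∀ a b c d : ℂ, (X ^ 2 + C a * X + C b) * (X ^ 2 + C c * X + C d) =
      X ^ 4 + C (a + c) * X ^ 3 + C (b + d + a * c) * X ^ 2 + C (a * d + b * c) * X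
        + C (b * d) := by
    intros
    simp only [map_add, map_mul]
    ring
  have h₁ : b ^ 2 - 3 ≠ 0 := sub_ne_zero.2 hb₃
  have h₂ : 3 - b ^ 2 ≠ 0 := sub_ne_zero.2 hb₃.symm
  have hcubic : innerCoeff α b + outerCoeff α b = α := by
    unfold innerCoeff outerCoeff; field_simp; ring
  have hlinear : innerCoeff α b * (3 / b) + b * outerCoeff α b = -α := by
    unfold innerCoeff outerCoeff; field_simp; ring
  have hconst : b * (3 / b) = 3 := by field_simp
  have hquadratic : b + 3 / b + innerCoeff α b * outerCoeff α b = splitBeta α b - 4 := by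
    unfold splitBeta; ring
  rw [realQuadratic, realQuadratic, hmul]
  simp only [← Complex.ofReal_add, ← Complex.ofReal_mul, hcubic, hlinear, hconst, hquadratic, q]
  push_cast
  simp only [map_neg, neg_mul, ← sub_eq_add_neg]

theorem splitBeta_eq_zero {α ρ : ℝ} (hα : α ≠ 0) (hρ : 0 < ρ) (h : |α| * ρ + ρ ^ 2 = 3) :
    splitBeta α ρ = 0 := by
  have h₃ : 3 - ρ ^ 2 = |α| * ρ := by linarith
  have h₃' : ρ ^ 2 - 3 = -(|α| * ρ) := by linarith
  have hα' : |α| ≠ 0 := abs_ne_zero.2 hα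
  unfold splitBeta innerCoeff outerCoeff
  rw [h₃, h₃']
  field_simp
  rw [sq_abs]
  ring

theorem abs_innerCoeff_lt {α b : ℝ} (hb : 0 < b) (h : |α| * b + b ^ 2 < 3) :
    |innerCoeff α b| < 1 + b := by
  have h₃ : 0 < 3 - b ^ 2 := by nlinarith [abs_nonneg α]
  rw [innerCoeff, abs_div, abs_mul, abs_mul, abs_of_pos hb, abs_of_pos (by linarith : 0 < b + 1),
    abs_sub_comm, abs_of_pos h₃, div_lt_iff₀ h₃]
  nlinarith

theorem abs_outerCoeff_lt {α b : ℝ} (hb : 0 < b) (h : |α| * b + b ^ 2 < 3) :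
    |outerCoeff α b| < 1 + 3 / b := by
  have h₃ : 0 < 3 - b ^ 2 := by nlinarith [abs_nonneg α]
  rw [outerCoeff, abs_div, abs_mul, abs_of_pos (by linarith : 0 < b + 3), abs_of_pos h₃,
    div_lt_iff₀ h₃, ← sub_pos]
  have : (1 + 3 / b) * (3 - b ^ 2) - |α| * (b + 3) = (b + 3) * (3 - b ^ 2 - |α| * b) / b := by
    field_simp
  rw [this]
  apply div_pos (mul_pos (by linarith) (by linarith)) hb

theorem tendsto_splitBeta (α : ℝ) : Tendsto (splitBeta α) (𝓝[>] 0) atTop := by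
  have h₁ : Tendsto (fun b : ℝ => 3 / b) (𝓝[>] 0) atTop := by
    simpa only [div_eq_mul_inv] using tendsto_inv_nhdsGT_zero.const_mul_atTop three_pos
  have : ContinuousAt (fun b => b + 4 + innerCoeff α b * outerCoeff α b) 0 := by
    unfold innerCoeff outerCoeff
    fun_prop (disch := norm_num)
  exact h₁.atTop_add (this.tendsto.mono_left nhdsWithin_le_nhds)

theorem exists_splitBeta_eq {α β : ℝ} (hα : 2 < |α|) (hβ : 0 < β) :
    ∃ b, 0 < b ∧ |α| * b + b ^ 2 < 3 ∧ splitBeta α b = β := by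
  obtain ⟨ρ, hρ, hρ₃⟩ : ∃ ρ, 0 < ρ ∧ |α| * ρ + ρ ^ 2 = 3 := by
    have hsqrt : √(|α| ^ 2 + 12) ^ 2 = |α| ^ 2 + 12 := Real.sq_sqrt (by positivity)
    have : |α| < √(|α| ^ 2 + 12) := (Real.lt_sqrt (abs_nonneg α)).2 (by linarith)
    exact ⟨(√(|α| ^ 2 + 12) - |α|) / 2, by linarith, by linear_combination (1 / 4 : ℝ) * hsqrt⟩
  have hden : ∀ b ∈ Ioc 0 ρ, b ≠ 0 ∧ b ^ 2 - 3 ≠ 0 ∧ 3 - b ^ 2 ≠ 0 := by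
    rintro b ⟨hb₀, hbρ⟩
    refine ⟨hb₀.ne', ?_, ?_⟩ <;> nlinarith
  have hρβ : splitBeta α ρ = 0 := splitBeta_eq_zero (abs_pos.1 (by linarith)) hρ hρ₃
  have hcont : ContinuousOn (splitBeta α) (Ioc 0 ρ) := by
    unfold splitBeta innerCoeff outerCoeff
    fun_prop (disch := grind)
  obtain ⟨b, ⟨hb₀, hbρ⟩, hbβ⟩ := isPreconnected_Ioc.intermediate_value_Ici
    (right_mem_Ioc.2 hρ) (le_principal_iff.2 (Ioc_mem_nhdsGT hρ)) hcont (tendsto_splitBeta α)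
    (show β ∈ Ici (splitBeta α ρ) from hρβ ▸ hβ.le)
  have hbρ' : b < ρ := hbρ.lt_of_ne (by rintro rfl; linarith)
  exact ⟨b, hb₀, by nlinarith, hbβ⟩

/-- If `α² > 4` and `β > 0`, then `q_{α,β}` has exactly 2 roots (with multiplicity)
in the open unit disk. -/
theorem stmt_0 (α β : ℝ) (hα : 4 < α ^ 2) (hβ : 0 < β) :
    Multiset.card ((q α β).roots.filter (fun z => ‖z‖ < 1)) = 2 := by
  have hα' : 2 < |α| := by simpa using sq_lt_sq.1 (show (2 : ℝ) ^ 2 < α ^ 2 by linarith)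
  obtain ⟨b, hb, hbα, rfl⟩ := exists_splitBeta_eq hα' hβ
  have hb₁ : b < 1 := by nlinarith
  rw [q_splitBeta_eq_mul hb.ne' (by nlinarith), filter_roots_mul_eq_left
    (mul_ne_zero (realQuadratic_monic _ _).ne_zero (realQuadratic_monic _ _).ne_zero),
    card_roots_realQuadratic]
  · intro z hz
    exact Complex.norm_lt_one_of_sq_add_mul_add_eq_zero hb₁ (abs_innerCoeff_lt hb hbα)
      (mem_roots_realQuadratic.1 hz)
  · intro z hz
    exact (Complex.one_lt_norm_of_sq_add_mul_add_eq_zero ((one_lt_div hb).2 (by linarith))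
      (abs_outerCoeff_lt hb hbα) (mem_roots_realQuadratic.1 hz)).not_gt
end

section
/- Let α, β be real numbers with 4 < α² < 6, 0 < β < 2, and α > 0. Then q_{α,β} has a real root in the open interval (−2, −1). -/
/-! On real arguments `q_{α,β}(-1) = β > 0` while `q_{α,β}(-2) = 4β - 6α + 3 < 0` once `α > 2`
and `β < 2`, so the intermediate value theorem gives a root in `(-2, -1)`. -/

open Polynomial

def qReal (α β w : ℝ) : ℝ := w ^ 4 + α * w ^ 3 + (β - 4) * w ^ 2 - α * w + 3

lemma q_eval_ofReal (α β w : ℝ) : (q α β).eval (w : ℂ) = qReal α β w := by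
  simp only [q, qReal, eval_add, eval_sub, eval_mul, eval_pow, eval_C, eval_X]
  push_cast
  ring

lemma qReal_neg_one (α β : ℝ) : qReal α β (-1) = β := by
  unfold qReal; ring

lemma qReal_neg_two (α β : ℝ) : qReal α β (-2) = 4 * β - 6 * α + 3 := by
  unfold qReal; ring

lemma exists_mem_Ioo_qReal_eq_zero {α β : ℝ} (hβ : 0 < β) (hαβ : 4 * β + 3 < 6 * α) :
    ∃ w ∈ Set.Ioo (-2 : ℝ) (-1), qReal α β w = 0 := by
  have hcont : ContinuousOn (qReal α β) (Set.Icc (-2) (-1)) := by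
    unfold qReal; fun_prop
  have hsign : (0 : ℝ) ∈ Set.Ioo (qReal α β (-2)) (qReal α β (-1)) := by
    rw [qReal_neg_two, qReal_neg_one]
    constructor <;> linarith
  exact intermediate_value_Ioo (by norm_num) hcont hsign

theorem stmt_2_general (α β : ℝ) (hα₁ : 4 < α ^ 2)
    (hβ₁ : 0 < β) (hβ₂ : β < 2) (hα : 0 < α) :
    ∃ w : ℝ, w ∈ Set.Ioo (-2 : ℝ) (-1) ∧ (q α β).IsRoot (w : ℂ) := by
  have hα2 : 2 < α := by nlinarith
  obtain ⟨w, hw, hroot⟩ := exists_mem_Ioo_qReal_eq_zero (α := α) hβ₁ (by linarith)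
  exact ⟨w, hw, by rw [IsRoot, q_eval_ofReal, hroot, Complex.ofReal_zero]⟩

/-- If `4 < α² < 6`, `0 < β < 2` and `α > 0`, then `q_{α,β}` has a real root
in the open interval `(−2, −1)`. -/
theorem stmt_2 (α β : ℝ) (hα₁ : 4 < α ^ 2) (hα₂ : α ^ 2 < 6)
    (hβ₁ : 0 < β) (hβ₂ : β < 2) (hα : 0 < α) :
    ∃ w : ℝ, w ∈ Set.Ioo (-2 : ℝ) (-1) ∧ (q α β).IsRoot (w : ℂ) :=
  stmt_2_general α β hα₁ hβ₁ hβ₂ hα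
end

section
/- Let m, k be natural numbers with m ≥ 1 and m ≥ 2k + 1 + √(6k² + 6k + 1), set l := m + k, and let x ∈ (0, 1) with ε := 2√(1 − x²). Then l(l+1)/6 < m²x²/(2 + ε)² if and only if x² > 24 m² l(l+1) / (3m² + 2l(l+1))². -/
/-!
Write `s := √(1 - x²)`, `A := 3m² + 2l(l+1)` and `B := 3m² - 2l(l+1)`. Since `m²x² = m²(1-s)(1+s)`,
the first inequality is linear in `s` after cancelling `1 + s`, and becomes `sA < B`. Since
`A² - B² = 24m²l(l+1)` and `x² = 1 - s²`, the second one becomes `(sA)² < B²`. The hypothesis on `m`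
says exactly that `m` lies beyond the larger root of `B`, as a quadratic in `m`, so `B ≥ 0` and the
two conditions agree.
-/

lemma two_mul_add_mul_add_add_one_le_three_mul_sq {m k : ℝ}
    (h : 2 * k + 1 + √(6 * k ^ 2 + 6 * k + 1) ≤ m) :
    2 * ((m + k) * (m + k + 1)) ≤ 3 * m ^ 2 := by
  obtain ⟨-, hsq⟩ := Real.sqrt_le_iff.mp (le_sub_iff_add_le'.mpr h)
  linarith

lemma div_six_lt_mul_sq_div_sq_iff {x : ℝ} (hx : x ^ 2 ≤ 1) (L M : ℝ) :
    L / 6 < M * x ^ 2 / (2 + 2 * √(1 - x ^ 2)) ^ 2 ↔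
      √(1 - x ^ 2) * (3 * M + 2 * L) < 3 * M - 2 * L := by
  set s := √(1 - x ^ 2)
  have hs : 0 ≤ s := Real.sqrt_nonneg _
  have hx' : M * x ^ 2 / (2 + 2 * s) ^ 2 = M * (1 - s) / (4 * (1 + s)) := by
    have hs2 : s ^ 2 = 1 - x ^ 2 := Real.sq_sqrt (by linarith)
    field_simp
    linear_combination 4 * M * hs2
  rw [hx', div_lt_div_iff₀ (by norm_num) (by positivity)]
  constructor <;> intro h <;> linarith

lemma mul_div_sq_lt_sq_iff {x L M : ℝ} (hx : x ^ 2 ≤ 1) (hLM : 2 * L ≤ 3 * M)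
    (hA : 0 < 3 * M + 2 * L) :
    24 * M * L / (3 * M + 2 * L) ^ 2 < x ^ 2 ↔
      √(1 - x ^ 2) * (3 * M + 2 * L) < 3 * M - 2 * L := by
  have hs : √(1 - x ^ 2) ^ 2 = 1 - x ^ 2 := Real.sq_sqrt (by linarith)
  have key : x ^ 2 * (3 * M + 2 * L) ^ 2 - 24 * M * L =
      (3 * M - 2 * L) ^ 2 - (√(1 - x ^ 2) * (3 * M + 2 * L)) ^ 2 := by
    rw [mul_pow, hs]; ring
  rw [div_lt_iff₀ (by positivity), ← sub_pos, key, sub_pos,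
    pow_lt_pow_iff_left₀ (by positivity) (by linarith) two_ne_zero]

theorem stmt_18_general (m k : ℕ)
    (hm₂ : 2 * (k : ℝ) + 1 + Real.sqrt (6 * (k : ℝ) ^ 2 + 6 * k + 1) ≤ (m : ℝ))
    (l : ℕ) (hl : l = m + k) (x : ℝ) (hx : x ∈ Set.Ioo (0 : ℝ) 1) :
    (l : ℝ) * (l + 1) / 6 < (m : ℝ) ^ 2 * x ^ 2 / (2 + 2 * Real.sqrt (1 - x ^ 2)) ^ 2 ↔
      24 * (m : ℝ) ^ 2 * ((l : ℝ) * (l + 1)) / (3 * (m : ℝ) ^ 2 + 2 * ((l : ℝ) * (l + 1))) ^ 2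
        < x ^ 2 := by
  have hx2 : x ^ 2 ≤ 1 := by nlinarith [hx.1, hx.2]
  have hB : 2 * ((l : ℝ) * (l + 1)) ≤ 3 * (m : ℝ) ^ 2 := by
    rw [hl, Nat.cast_add]
    exact two_mul_add_mul_add_add_one_le_three_mul_sq hm₂
  have hm : (1 : ℝ) ≤ m := by
    linarith [Real.sqrt_nonneg (6 * (k : ℝ) ^ 2 + 6 * k + 1), (Nat.cast_nonneg k : (0 : ℝ) ≤ k)]
  have hA : 0 < 3 * (m : ℝ) ^ 2 + 2 * ((l : ℝ) * (l + 1)) := by positivity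
  rw [div_six_lt_mul_sq_div_sq_iff hx2, mul_div_sq_lt_sq_iff hx2 hB hA]

/-- For natural numbers `m ≥ 1`, `k` with `m ≥ 2k+1+√(6k²+6k+1)`, `l := m + k`,
`x ∈ (0,1)` and `ε := 2√(1−x²)`:
`l(l+1)/6 < m²x²/(2+ε)²  ↔  x² > 24m²l(l+1)/(3m²+2l(l+1))²`. -/
theorem stmt_18 (m k : ℕ) (hm₁ : 1 ≤ m)
    (hm₂ : 2 * (k : ℝ) + 1 + Real.sqrt (6 * (k : ℝ) ^ 2 + 6 * k + 1) ≤ (m : ℝ))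
    (l : ℕ) (hl : l = m + k) (x : ℝ) (hx : x ∈ Set.Ioo (0 : ℝ) 1) :
    (l : ℝ) * (l + 1) / 6 < (m : ℝ) ^ 2 * x ^ 2 / (2 + 2 * Real.sqrt (1 - x ^ 2)) ^ 2 ↔
      24 * (m : ℝ) ^ 2 * ((l : ℝ) * (l + 1)) / (3 * (m : ℝ) ^ 2 + 2 * ((l : ℝ) * (l + 1))) ^ 2
        < x ^ 2 :=
  stmt_18_general m k hm₂ l hl x hx
end
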